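/- arXiv:1903.05534 — 4 statements merged into one kernel-verified Lean document; each statement's English description precedes it below -/
import Mathlib

section
/- For a symmetric friend-oriented hedonic game with k = 1, if there exist two elimination pairs {i,j} and {u,v} such that i is a friend of both u and v, then no CIS-robust partition under deletion of a single player exists. -/
open Finset

section HedonicDefs

variable {α : Type*} [DecidableEq α] [Fintype α]

/-- Additive utility of player `i` in coalition `S`. -/
def util (w : α → α → ℤ) (S : Finset α) (i : α) : ℤ := ∑ j ∈ S, w i j

/-- `π` is a partition of the player set `V`: every player of `V` lies in its own
coalition, coalitions are contained in `V`, and membership determines the coalition. -/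
def IsPartition (V : Finset α) (π : α → Finset α) : Prop :=
  (∀ i ∈ V, i ∈ π i ∧ π i ⊆ V) ∧ ∀ i ∈ V, ∀ j ∈ π i, π j = π i

/-- `S` is a coalition of the partition `π` on `V`, or the empty coalition. -/
def IsCoalitionOf (V : Finset α) (π : α → Finset α) (S : Finset α) : Prop :=
  S = ∅ ∨ ∃ j ∈ V, S = π j

/-- Player `i` has an NS-deviation from `π i` to `S`. -/
def NSDev (w : α → α → ℤ) (V : Finset α) (π : α → Finset α) (i : α) (S : Finset α) : Prop :=
  IsCoalitionOf V π S ∧ S ≠ π i ∧ i ∉ S ∧ util w (π i) i < util w (insert i S) i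

/-- Player `i` has an IS-deviation from `π i` to `S`: an NS-deviation accepted by
all members of the target coalition `S`. -/
def ISDev (w : α → α → ℤ) (V : Finset α) (π : α → Finset α) (i : α) (S : Finset α) : Prop :=
  NSDev w V π i S ∧ ∀ j ∈ S, util w S j ≤ util w (insert i S) j

/-- Player `i` has a CIS-deviation from `π i` to `S`: an IS-deviation also accepted by
all members of the abandoned coalition. -/
def CISDev (w : α → α → ℤ) (V : Finset α) (π : α → Finset α) (i : α) (S : Finset α) : Prop :=
  ISDev w V π i S ∧ ∀ j ∈ (π i).erase i, util w (π i) j ≤ util w ((π i).erase i) j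

def NashStable (w : α → α → ℤ) (V : Finset α) (π : α → Finset α) : Prop :=
  ∀ i ∈ V, ∀ S : Finset α, ¬ NSDev w V π i S

def IndStable (w : α → α → ℤ) (V : Finset α) (π : α → Finset α) : Prop :=
  ∀ i ∈ V, ∀ S : Finset α, ¬ ISDev w V π i S

def CIStable (w : α → α → ℤ) (V : Finset α) (π : α → Finset α) : Prop :=
  ∀ i ∈ V, ∀ S : Finset α, ¬ CISDev w V π i S

/-- Individual rationality: each player weakly prefers its coalition to being alone
(being alone gives utility `w i i = 0`). -/
def IndRational (w : α → α → ℤ) (V : Finset α) (π : α → Finset α) : Prop :=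
  ∀ i ∈ V, 0 ≤ util w (π i) i

/-- Core stability: no nonempty coalition strongly blocks `π`. -/
def CoreStable (w : α → α → ℤ) (V : Finset α) (π : α → Finset α) : Prop :=
  ¬ ∃ S : Finset α, S ⊆ V ∧ S.Nonempty ∧ ∀ i ∈ S, util w (π i) i < util w S i

/-- `π` is robust for the stability notion `St` under deletion of at most `k` players:
`π` satisfies `St` and so does its truncation after removing any `X` with `|X| ≤ k`. -/
def Robust (St : Finset α → (α → Finset α) → Prop) (V : Finset α)
    (π : α → Finset α) (k : ℕ) : Prop :=
  St V π ∧ ∀ X ⊆ V, X.card ≤ k → St (V \ X) (fun i => π i \ X)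

/-- Symmetric friend-oriented game: symmetric weights, zero on the diagonal, and each
off-diagonal weight equals `n` (friends) or `-1` (enemies), where `n` is the number of players. -/
def FriendOriented (w : α → α → ℤ) : Prop :=
  (∀ i j : α, w i j = w j i) ∧ (∀ i : α, w i i = 0) ∧
    ∀ i j : α, i ≠ j → w i j = (Fintype.card α : ℤ) ∨ w i j = -1

/-- `j` is a friend of `i`. -/
def Friend (w : α → α → ℤ) (i j : α) : Prop := i ≠ j ∧ 0 < w i j


instance (w : α → α → ℤ) (i j : α) : Decidable (Friend w i j) :=
  inferInstanceAs (Decidable (_ ∧ _))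

/-- `S` is a clique of the friendship graph. -/
def IsClique (w : α → α → ℤ) (S : Finset α) : Prop :=
  ∀ i ∈ S, ∀ j ∈ S, i ≠ j → Friend w i j

/-- Two players lie in the same connected component of the friendship graph. -/
def SameComp (w : α → α → ℤ) : α → α → Prop :=
  Relation.ReflTransGen (fun a b => Friend w a b)

/-- The connected component of `v` in the friendship graph, as a set. -/
def comp (w : α → α → ℤ) (v : α) : Set α := {u | SameComp w v u}

end HedonicDefs
section ElimDefs

variable {α : Type*} [DecidableEq α] [Fintype α]

/-- Friendship within the subgame on vertex set `V`. -/
def FriendIn (w : α → α → ℤ) (V : Set α) (i j : α) : Prop :=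
  i ∈ V ∧ j ∈ V ∧ Friend w i j

/-- `j` is the unique friend of `i` in the subgraph induced by `V`. -/
def UniqueFriendIn (w : α → α → ℤ) (V : Set α) (i j : α) : Prop :=
  FriendIn w V i j ∧ ∀ l : α, FriendIn w V i l → l = j

/-- `v` is a leaf (degree-one vertex) of the subgraph induced by `V`. -/
def LeafIn (w : α → α → ℤ) (V : Set α) (v : α) : Prop :=
  v ∈ V ∧ ∃! u : α, FriendIn w V v u

/-- `j` is a pseudo-center of the subgraph induced by `V`:
at most one neighbor of `j` is a non-leaf. -/
def PseudoCenterIn (w : α → α → ℤ) (V : Set α) (j : α) : Prop :=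
  ∀ u u' : α, FriendIn w V j u → ¬ LeafIn w V u →
    FriendIn w V j u' → ¬ LeafIn w V u' → u = u'

/-- Players removed by a list of pairs. -/
def removed (L : List (α × α)) : Set α := {v | ∃ p ∈ L, v = p.1 ∨ v = p.2}

/-- `L` is an outer elimination sequence: at each step `t`, in the graph `G_t` obtained
by deleting all earlier pairs, `j_t` is the unique friend of `i_t` and, moreover,
(E1) `j_t` is a pseudo-center of `G_t`, or (E2) `i_t` is a friend of an earlier-removed player. -/
def IsElimSeq (w : α → α → ℤ) (L : List (α × α)) : Prop :=
  ∀ (t : ℕ) (h : t < L.length),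
    UniqueFriendIn w {v | v ∉ removed (L.take t)} (L.get ⟨t, h⟩).1 (L.get ⟨t, h⟩).2 ∧
      (PseudoCenterIn w {v | v ∉ removed (L.take t)} (L.get ⟨t, h⟩).2 ∨
        ∃ q ∈ removed (L.take t), Friend w (L.get ⟨t, h⟩).1 q)

/-- `{i, j}` is an elimination pair: it appears in some outer elimination sequence. -/
def ElimPair (w : α → α → ℤ) (i j : α) : Prop :=
  ∃ L : List (α × α), IsElimSeq w L ∧ (i, j) ∈ L

/-- `P_w`: the players belonging to some elimination pair. -/
def Pset (w : α → α → ℤ) : Set α :=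
  {v | ∃ i j : α, ElimPair w i j ∧ (v = i ∨ v = j)}

/-- `S_w`: players outside `P_w` with exactly one friend outside `P_w`. -/
def Sset (w : α → α → ℤ) : Set α :=
  {v | v ∉ Pset w ∧ ∃! u : α, u ∉ Pset w ∧ Friend w v u}

/-- `B_w`: players with at least two friends outside `P_w ∪ S_w`. -/
def Bset (w : α → α → ℤ) : Set α :=
  {v | ∃ u u' : α, u ≠ u' ∧ u ∉ Pset w ∪ Sset w ∧ u' ∉ Pset w ∪ Sset w ∧
    Friend w v u ∧ Friend w v u'}

/-- `R_w`: the remaining players. -/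
def Rset (w : α → α → ℤ) : Set α := {v | v ∉ Pset w ∪ Sset w ∪ Bset w}

end ElimDefs

section AuxProof

variable {α : Type*} [DecidableEq α] [Fintype α]

lemma fo_enemy {w : α → α → ℤ} (hw : FriendOriented w) {a b : α} (hab : a ≠ b)
    (h : ¬ Friend w a b) : w a b = -1 := by
  rcases hw.2.2 a b hab with h1 | h1
  · exfalso
    apply h
    refine ⟨hab, ?_⟩
    rw [h1]
    have : Nonempty α := ⟨a⟩
    exact_mod_cast Fintype.card_pos
  · exact h1

lemma util_insert (w : α → α → ℤ) {x : α} {S : Finset α} (h : x ∉ S) (y : α) :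
    util w (insert x S) y = w y x + util w S y := Finset.sum_insert h

lemma util_erase (w : α → α → ℤ) {x : α} {S : Finset α} (h : x ∈ S) (y : α) :
    util w S y = util w (S.erase x) y + w y x := (Finset.sum_erase_add S _ h).symm

lemma util_enemies {w : α → α → ℤ} {S : Finset α} {x : α} (hxx : w x x = 0)
    (h : ∀ y ∈ S, y ≠ x → w x y = -1) : util w S x = -((S.erase x).card : ℤ) := by
  by_cases hx : x ∈ S
  · rw [util_erase w hx x, hxx, add_zero]
    unfold util
    rw [Finset.sum_congr rfl
      (fun y hy => h y (Finset.mem_of_mem_erase hy) (Finset.ne_of_mem_erase hy))]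
    simp
  · unfold util
    rw [Finset.sum_congr rfl (fun y hy => h y hy (fun e => hx (e ▸ hy)))]
    rw [Finset.erase_eq_of_notMem hx]
    simp

lemma cis_escape {w : α → α → ℤ} {V : Finset α} {π : α → Finset α} {x z : α}
    (hx : x ∈ π x) (hz : z ∈ π x) (hzx : z ≠ x)
    (henem : ∀ y ∈ π x, y ≠ x → w x y = -1 ∧ w y x = -1)
    (hxx : w x x = 0) : CISDev w V π x ∅ := by
  have hut : util w (π x) x = -(((π x).erase x).card : ℤ) :=
    util_enemies hxx (fun y hy hne => (henem y hy hne).1)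
  have hcard : 0 < ((π x).erase x).card :=
    Finset.card_pos.mpr ⟨z, Finset.mem_erase.mpr ⟨hzx, hz⟩⟩
  refine ⟨⟨⟨Or.inl rfl, ?_, ?_, ?_⟩, ?_⟩, ?_⟩
  · intro h; rw [← h] at hx; exact absurd hx (Finset.notMem_empty x)
  · exact Finset.notMem_empty x
  · rw [hut]
    have h0 : util w (insert x ∅) x = 0 := by simp [util, hxx]
    rw [h0]
    have : (0:ℤ) < (((π x).erase x).card : ℤ) := by exact_mod_cast hcard
    linarith
  · intro y hy; exact absurd hy (Finset.notMem_empty y)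
  · intro y hy
    rw [util_erase w hx y,
      (henem y (Finset.mem_of_mem_erase hy) (Finset.ne_of_mem_erase hy)).2]
    linarith

lemma cis_join {w : α → α → ℤ} {V : Finset α} {π : α → Finset α} {x z : α}
    (hzV : z ∈ V) (hπz : π z = {z}) (hxz : x ≠ z) (hx : x ∈ π x)
    (henem : ∀ y ∈ π x, y ≠ x → w x y = -1 ∧ w y x = -1)
    (hxx : w x x = 0) (hfr : 0 < w x z) (hzx : 0 ≤ w z x) : CISDev w V π x {z} := by
  have hut : util w (π x) x = -(((π x).erase x).card : ℤ) :=
    util_enemies hxx (fun y hy hne => (henem y hy hne).1)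
  have hxnz : x ∉ ({z} : Finset α) := by rw [Finset.mem_singleton]; exact hxz
  refine ⟨⟨⟨Or.inr ⟨z, hzV, hπz.symm⟩, ?_, hxnz, ?_⟩, ?_⟩, ?_⟩
  · intro h; rw [← h] at hx; rw [Finset.mem_singleton] at hx; exact hxz hx
  · rw [hut, util_insert w hxnz x]
    have h1 : util w ({z} : Finset α) x = w x z := by simp [util]
    rw [h1, hxx]
    have : (0:ℤ) ≤ (((π x).erase x).card : ℤ) := by positivity
    linarith
  · intro y hy
    rw [Finset.mem_singleton] at hy
    subst hy
    rw [util_insert w hxnz y]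
    linarith
  · intro y hy
    rw [util_erase w hx y,
      (henem y (Finset.mem_of_mem_erase hy) (Finset.ne_of_mem_erase hy)).2]
    linarith

lemma cis_join_pair {w : α → α → ℤ} {V : Finset α} {π : α → Finset α} {x u v : α}
    (huV : u ∈ V) (hπu : π u = {u, v}) (hπx : π x = {x})
    (hxu : x ≠ u) (hxv : x ≠ v) (huv : u ≠ v) (hxx : w x x = 0)
    (h1 : 0 < w x u) (h2 : 0 < w x v) (h1' : 0 ≤ w u x) (h2' : 0 ≤ w v x) :
    CISDev w V π x {u, v} := by
  have hxm : x ∉ ({u, v} : Finset α) := by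
    simp only [Finset.mem_insert, Finset.mem_singleton]
    rintro (rfl | rfl)
    · exact hxu rfl
    · exact hxv rfl
  refine ⟨⟨⟨Or.inr ⟨u, huV, hπu.symm⟩, ?_, hxm, ?_⟩, ?_⟩, ?_⟩
  · intro h
    rw [hπx] at h
    have hu : u ∈ ({x} : Finset α) := by rw [← h]; simp
    rw [Finset.mem_singleton] at hu
    exact hxu hu.symm
  · have huvs : util w ({u, v} : Finset α) x = w x u + w x v := by
      rw [show ({u, v} : Finset α) = insert u {v} from rfl, util,
        Finset.sum_insert (by simpa using huv), Finset.sum_singleton]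
    rw [hπx, util_insert w hxm x, huvs]
    have h0 : util w ({x} : Finset α) x = 0 := by simp [util, hxx]
    rw [h0, hxx]
    linarith
  · intro y hy
    rw [util_insert w hxm y]
    rcases Finset.mem_insert.mp hy with h | h
    · subst h; linarith
    · rw [Finset.mem_singleton] at h; subst h; linarith
  · intro y hy
    rw [hπx] at hy
    simp at hy

lemma pair_sdiff_right {a b : α} (h : a ≠ b) : ({a, b} : Finset α) \ {b} = {a} := by
  ext y
  simp only [Finset.mem_sdiff, Finset.mem_insert, Finset.mem_singleton]
  constructor
  · rintro ⟨h1 | h1, h2⟩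
    · exact h1
    · exact absurd h1 h2
  · rintro rfl
    exact ⟨Or.inl rfl, h⟩

lemma pair_sdiff_left {a b : α} (h : a ≠ b) : ({a, b} : Finset α) \ {a} = {b} := by
  rw [Finset.pair_comm]; exact pair_sdiff_right (Ne.symm h)

lemma mem_removed_take {L : List (α × α)} {t : ℕ} {x : α} :
    x ∈ removed (L.take t) ↔ ∃ s, ∃ hs : s < L.length, s < t ∧
      (x = (L.get ⟨s, hs⟩).1 ∨ x = (L.get ⟨s, hs⟩).2) := by
  constructor
  · rintro ⟨p, hp, hor⟩
    rw [List.mem_take_iff_getElem] at hp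
    obtain ⟨s, hs, hps⟩ := hp
    exact ⟨s, (lt_min_iff.mp hs).2, (lt_min_iff.mp hs).1,
      by rw [List.get_eq_getElem]; rw [hps]; exact hor⟩
  · rintro ⟨s, hs, hst, hor⟩
    refine ⟨L.get ⟨s, hs⟩, ?_, hor⟩
    rw [List.mem_take_iff_getElem]
    exact ⟨s, lt_min hst hs, by simp⟩

lemma elim_pair_coalition {w : α → α → ℤ} (hw : FriendOriented w)
    {π : α → Finset α} (hpart : IsPartition (Finset.univ : Finset α) π)
    (hrob : Robust (CIStable w) Finset.univ π 1)
    {L : List (α × α)} (hL : IsElimSeq w L) :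
    ∀ t, ∀ ht : t < L.length, π (L.get ⟨t, ht⟩).1 = {(L.get ⟨t, ht⟩).1, (L.get ⟨t, ht⟩).2} := by
  have hmem : ∀ x : α, x ∈ π x := fun x => (hpart.1 x (Finset.mem_univ x)).1
  have hsame : ∀ x y : α, y ∈ π x → π y = π x :=
    fun x y hy => hpart.2 x (Finset.mem_univ x) y hy
  have hwd : ∀ a : α, w a a = 0 := hw.2.1
  intro t
  induction t using Nat.strong_induction_on with
  | _ t IH =>
  intro ht
  have hstep := hL t ht
  set i := (L.get ⟨t, ht⟩).1 with hi
  set j := (L.get ⟨t, ht⟩).2 with hj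
  obtain ⟨⟨⟨hiG, hjG, hfij⟩, huf⟩, hE⟩ := hstep
  have hiR : i ∉ removed (L.take t) := hiG
  have hjR : j ∉ removed (L.take t) := hjG
  have hij : i ≠ j := hfij.1
  have hclosed : ∀ x, x ∈ removed (L.take t) → ∀ y ∈ π x, y ∈ removed (L.take t) := by
    intro x hx y hy
    obtain ⟨s, hs, hst, hor⟩ := mem_removed_take.mp hx
    have hπs := IH s hst hs
    have hjs : (L.get ⟨s, hs⟩).2 ∈ π (L.get ⟨s, hs⟩).1 := by rw [hπs]; simp
    have hπx : π x = {(L.get ⟨s, hs⟩).1, (L.get ⟨s, hs⟩).2} := by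
      rcases hor with h | h
      · rw [h, hπs]
      · rw [h, hsame _ _ hjs, hπs]
    rw [hπx] at hy
    rcases Finset.mem_insert.mp hy with h | h
    · exact mem_removed_take.mpr ⟨s, hs, hst, Or.inl h⟩
    · rw [Finset.mem_singleton] at h
      exact mem_removed_take.mpr ⟨s, hs, hst, Or.inr h⟩
  have hdisj : ∀ p : α, p ∉ removed (L.take t) → ∀ y ∈ π p, y ∉ removed (L.take t) := by
    intro p hp y hy hyR
    exact hp (hclosed y hyR p (by rw [hsame p y hy]; exact hmem p))
  have honly : ∀ y, y ∉ removed (L.take t) → y ≠ j → ¬ Friend w i y := by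
    intro y hyR hyj hf
    exact hyj (huf y ⟨hiG, hyR, hf⟩)
  have henemy : ∀ y, y ∉ removed (L.take t) → y ≠ i → y ≠ j → w i y = -1 ∧ w y i = -1 := by
    intro y hyR hyi hyj
    have h1 : w i y = -1 := fo_enemy hw (Ne.symm hyi) (honly y hyR hyj)
    exact ⟨h1, by rw [hw.1 y i]; exact h1⟩
  by_cases hjmem : j ∈ π i
  · -- Case B: j in π i; show π i = {i, j}
    by_contra hne
    have hsub : {i, j} ⊆ π i := by
      intro y hy
      rcases Finset.mem_insert.mp hy with h | h
      · exact h ▸ hmem i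
      · rw [Finset.mem_singleton] at h; exact h ▸ hjmem
    obtain ⟨p, hpmem, hpnot⟩ :=
      Finset.not_subset.mp (fun hsub' => hne (Finset.Subset.antisymm hsub' hsub))
    have hpi : p ≠ i := fun h => hpnot (by rw [h]; simp)
    have hpj : p ≠ j := fun h => hpnot (by rw [h]; simp)
    have hC := hrob.2 {j} (Finset.subset_univ _) (by simp)
    refine hC i (by simp [hij]) ∅ ?_
    refine cis_escape (x := i) (z := p) (π := fun a => π a \ {j}) ?_ ?_ hpi ?_ (hwd i)
    · show i ∈ π i \ {j}
      exact Finset.mem_sdiff.mpr ⟨hmem i, by simp [hij]⟩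
    · show p ∈ π i \ {j}
      exact Finset.mem_sdiff.mpr ⟨hpmem, by simp [hpj]⟩
    · intro y hy hyi
      have hy' : y ∈ π i \ {j} := hy
      have hy1 := (Finset.mem_sdiff.mp hy').1
      have hyj : y ≠ j := by
        have := (Finset.mem_sdiff.mp hy').2
        simpa using this
      exact henemy y (hdisj i hiR y hy1) hyi hyj
  · exfalso
    have hsingle : π i = {i} := by
      by_contra hne
      obtain ⟨p, hpmem, hpnot⟩ := Finset.not_subset.mp
        (fun hsub' => hne (Finset.Subset.antisymm hsub'
          (Finset.singleton_subset_iff.mpr (hmem i))))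
      have hpi : p ≠ i := by simpa using hpnot
      refine hrob.1 i (Finset.mem_univ i) ∅
        (cis_escape (z := p) (hmem i) hpmem hpi ?_ (hwd i))
      intro y hy hyi
      have hyj : y ≠ j := fun h => hjmem (h ▸ hy)
      exact henemy y (hdisj i hiR y hy) hyi hyj
    rcases hE with hPC | ⟨q, hqR, hfiq⟩
    · -- E1 : j is a pseudo-center
      have hjT : j ∈ π j := hmem j
      have hiT : i ∉ π j := by
        intro h
        apply hjmem
        rw [hsame j i h]
        exact hjT
      have hTnoR : ∀ y ∈ π j, y ∉ removed (L.take t) := hdisj j hjR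
      by_cases hTj : π j = {j}
      · refine hrob.1 i (Finset.mem_univ i) {j}
          (cis_join (Finset.mem_univ j) hTj hij (hmem i) ?_ (hwd i) hfij.2 ?_)
        · intro y hy hyi
          rw [hsingle, Finset.mem_singleton] at hy
          exact absurd hy hyi
        · rw [hw.1 j i]; exact le_of_lt hfij.2
      · have hfriendT : ∀ x ∈ π j, ∃ y ∈ π j, Friend w x y := by
          intro x hx
          by_contra hno
          push_neg at hno
          have hπx : π x = π j := hsame j x hx
          have hTx : π j ≠ {x} := by
            intro h
            have hjx : j = x := by
              rw [h, Finset.mem_singleton] at hjT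
              exact hjT
            exact hTj (hjx ▸ h)
          obtain ⟨z, hzmem, hznot⟩ := Finset.not_subset.mp
            (fun hsub' => hTx (Finset.Subset.antisymm hsub'
              (Finset.singleton_subset_iff.mpr hx)))
          have hzx : z ≠ x := by simpa using hznot
          refine hrob.1 x (Finset.mem_univ x) ∅
            (cis_escape (z := z) (hmem x) (by rw [hπx]; exact hzmem) hzx ?_ (hwd x))
          intro y hy hyx
          rw [hπx] at hy
          have h1 : w x y = -1 := fo_enemy hw (Ne.symm hyx) (fun hf => hno y hy hf)
          exact ⟨h1, by rw [hw.1 y x]; exact h1⟩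
        obtain ⟨p, hpT, hfjp⟩ := hfriendT j hjT
        have hjp : j ≠ p := hfjp.1
        by_cases hFone : ∀ y ∈ π j, Friend w j y → y = p
        · -- delete p, then j joins {i}
          have hip : i ≠ p := fun h => hiT (h ▸ hpT)
          have hC := hrob.2 {p} (Finset.subset_univ _) (by simp)
          refine hC j (by simp [hjp]) {i} ?_
          refine cis_join (x := j) (z := i) (π := fun a => π a \ {p})
            ?_ ?_ (Ne.symm hij) ?_ ?_ (hwd j) ?_ ?_
          · simp [hip]
          · show π i \ {p} = {i}
            rw [hsingle]
            ext y
            simp only [Finset.mem_sdiff, Finset.mem_singleton]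
            constructor
            · rintro ⟨h1, _⟩; exact h1
            · rintro rfl; exact ⟨rfl, hip⟩
          · show j ∈ π j \ {p}
            exact Finset.mem_sdiff.mpr ⟨hjT, by simp [hjp]⟩
          · intro y hy hyj
            have hy' : y ∈ π j \ {p} := hy
            have hymem := (Finset.mem_sdiff.mp hy').1
            have hyp : y ≠ p := by
              have := (Finset.mem_sdiff.mp hy').2
              simpa using this
            have hnf : ¬ Friend w j y := fun hf => hyp (hFone y hymem hf)
            have h1 : w j y = -1 := fo_enemy hw (Ne.symm hyj) hnf
            exact ⟨h1, by rw [hw.1 y j]; exact h1⟩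
          · rw [hw.1 j i]; exact hfij.2
          · exact le_of_lt hfij.2
        · push_neg at hFone
          obtain ⟨p', hp'T, hfjp', hp'p⟩ := hFone
          have hjp' : j ≠ p' := hfjp'.1
          have hGp : FriendIn w {v | v ∉ removed (L.take t)} j p := ⟨hjR, hTnoR p hpT, hfjp⟩
          have hGp' : FriendIn w {v | v ∉ removed (L.take t)} j p' := ⟨hjR, hTnoR p' hp'T, hfjp'⟩
          have hleaf : LeafIn w {v | v ∉ removed (L.take t)} p ∨
              LeafIn w {v | v ∉ removed (L.take t)} p' := by
            by_contra h
            push_neg at h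
            exact hp'p (hPC p' p hGp' h.2 hGp h.1)
          have key : ∀ a b : α, a ∈ π j → b ∈ π j → Friend w j a → a ≠ b → b ≠ j →
              LeafIn w {v | v ∉ removed (L.take t)} a → False := by
            intro a b haT hbT hfja hab hbj hl
            have haj : a ≠ j := Ne.symm hfja.1
            obtain ⟨haG, u₀, hu₀, hun⟩ := hl
            have hfaj : FriendIn w {v | v ∉ removed (L.take t)} a j :=
              ⟨hTnoR a haT, hjR, haj, by rw [hw.1 a j]; exact hfja.2⟩
            have haonly : ∀ y, FriendIn w {v | v ∉ removed (L.take t)} a y → y = j :=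
              fun y hy => (hun y hy).trans (hun j hfaj).symm
            have hC := hrob.2 {j} (Finset.subset_univ _) (by simp)
            refine hC a (by simp [haj]) ∅ ?_
            refine cis_escape (x := a) (z := b) (π := fun c => π c \ {j})
              ?_ ?_ (Ne.symm hab) ?_ (hwd a)
            · show a ∈ π a \ {j}
              exact Finset.mem_sdiff.mpr ⟨hmem a, by simp [haj]⟩
            · show b ∈ π a \ {j}
              rw [hsame j a haT]
              exact Finset.mem_sdiff.mpr ⟨hbT, by simp [hbj]⟩
            · intro y hy hya
              have hy' : y ∈ π a \ {j} := hy
              have hymem : y ∈ π j := by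
                rw [← hsame j a haT]
                exact (Finset.mem_sdiff.mp hy').1
              have hyj : y ≠ j := by
                have := (Finset.mem_sdiff.mp hy').2
                simpa using this
              have hnf : ¬ Friend w a y := fun hf =>
                hyj (haonly y ⟨hTnoR a haT, hTnoR y hymem, hf⟩)
              have h1 : w a y = -1 := fo_enemy hw (Ne.symm hya) hnf
              exact ⟨h1, by rw [hw.1 y a]; exact h1⟩
          rcases hleaf with hl | hl
          · exact key p p' hpT hp'T hfjp (Ne.symm hp'p) (Ne.symm hjp') hl
          · exact key p' p hp'T hpT hfjp' hp'p (Ne.symm hjp) hl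
    · -- E2 : i has a removed friend q
      obtain ⟨s, hs, hst, hor⟩ := mem_removed_take.mp hqR
      have hπa : π (L.get ⟨s, hs⟩).1 = {(L.get ⟨s, hs⟩).1, (L.get ⟨s, hs⟩).2} := IH s hst hs
      have hab : (L.get ⟨s, hs⟩).1 ≠ (L.get ⟨s, hs⟩).2 := (hL s hs).1.1.2.2.1
      have hπq : π q = {(L.get ⟨s, hs⟩).1, (L.get ⟨s, hs⟩).2} := by
        rcases hor with h | h
        · rw [h]; exact hπa
        · rw [h, hsame _ _ (by rw [hπa]; simp)]
          exact hπa
      obtain ⟨r, hqr, hrrem, hpair⟩ : ∃ r, q ≠ r ∧ r ∈ removed (L.take t) ∧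
          ({(L.get ⟨s, hs⟩).1, (L.get ⟨s, hs⟩).2} : Finset α) \ {r} = {q} := by
        rcases hor with h | h
        · exact ⟨(L.get ⟨s, hs⟩).2, by rw [h]; exact hab,
            mem_removed_take.mpr ⟨s, hs, hst, Or.inr rfl⟩,
            by rw [h]; exact pair_sdiff_right hab⟩
        · exact ⟨(L.get ⟨s, hs⟩).1, by rw [h]; exact hab.symm,
            mem_removed_take.mpr ⟨s, hs, hst, Or.inl rfl⟩,
            by rw [h]; exact pair_sdiff_left hab⟩
      have hir : i ≠ r := fun h => hiR (h ▸ hrrem)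
      have hiq : i ≠ q := fun h => hiR (h ▸ hqR)
      have hC := hrob.2 {r} (Finset.subset_univ _) (by simp)
      refine hC i (by simp [hir]) {q} ?_
      refine cis_join (x := i) (z := q) (π := fun c => π c \ {r})
        ?_ ?_ hiq ?_ ?_ (hwd i) hfiq.2 ?_
      · simp [hqr]
      · show π q \ {r} = {q}
        rw [hπq]; exact hpair
      · show i ∈ π i \ {r}
        exact Finset.mem_sdiff.mpr ⟨hmem i, by simp [hir]⟩
      · intro y hy hyi
        have hy' : y ∈ π i \ {r} := hy
        have hy1 := (Finset.mem_sdiff.mp hy').1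
        rw [hsingle, Finset.mem_singleton] at hy1
        exact absurd hy1 hyi
      · rw [hw.1 q i]; exact le_of_lt hfiq.2

end AuxProof

/-- For `k = 1`, if there are two elimination pairs `{i, j}` and `{u, v}`
such that `i` is a friend of both `u` and `v`, then no CIS-robust partition exists. -/
theorem no_cis_robust_of_adjacent_elim_pairs {α : Type*} [DecidableEq α] [Fintype α]
    (w : α → α → ℤ) (hw : FriendOriented w)
    (i j u v : α) (hp1 : ElimPair w i j) (hp2 : ElimPair w u v)
    (hfu : Friend w i u) (hfv : Friend w i v) (huv : u ≠ v) :
    ¬ ∃ π : α → Finset α, IsPartition (Finset.univ : Finset α) π ∧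
      Robust (CIStable w) Finset.univ π 1 := by
  rintro ⟨π, hpart, hrob⟩
  have hmem : ∀ x : α, x ∈ π x := fun x => (hpart.1 x (Finset.mem_univ x)).1
  have hsame : ∀ x y : α, y ∈ π x → π y = π x :=
    fun x y hy => hpart.2 x (Finset.mem_univ x) y hy
  obtain ⟨L1, hL1, hmem1⟩ := hp1
  obtain ⟨L2, hL2, hmem2⟩ := hp2
  obtain ⟨⟨t, ht⟩, hget1⟩ := List.mem_iff_get.mp hmem1
  obtain ⟨⟨s, hs⟩, hget2⟩ := List.mem_iff_get.mp hmem2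
  have hπi : π i = {i, j} := by
    have h := elim_pair_coalition hw hpart hrob hL1 t ht
    rw [hget1] at h
    simpa using h
  have hπu : π u = {u, v} := by
    have h := elim_pair_coalition hw hpart hrob hL2 s hs
    rw [hget2] at h
    simpa using h
  have hij : i ≠ j := by
    have h := (hL1 t ht).1.1
    rw [hget1] at h
    exact h.2.2.1
  have hiu : i ≠ u := hfu.1
  have hiv : i ≠ v := hfv.1
  have hπj : π j = {i, j} := by
    rw [hsame i j (by rw [hπi]; simp)]
    exact hπi
  have hinotuv : i ∉ ({u, v} : Finset α) := by
    simp only [Finset.mem_insert, Finset.mem_singleton]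
    rintro (rfl | rfl)
    · exact hiu rfl
    · exact hiv rfl
  have hju : j ≠ u := by
    intro h
    have h2 : π j = {u, v} := by rw [h, hπu]
    rw [hπj] at h2
    exact hinotuv (by rw [← h2]; simp)
  have hjv : j ≠ v := by
    intro h
    have h2 : π j = {u, v} := by
      rw [h, hsame u v (by rw [hπu]; simp)]
      exact hπu
    rw [hπj] at h2
    exact hinotuv (by rw [← h2]; simp)
  have hC := hrob.2 {j} (Finset.subset_univ _) (by simp)
  refine hC i (by simp [hij]) {u, v} ?_
  refine cis_join_pair (x := i) (u := u) (v := v) (π := fun c => π c \ {j})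
    ?_ ?_ ?_ hiu hiv huv (hw.2.1 i) hfu.2 hfv.2 ?_ ?_
  · simp [Ne.symm hju]
  · show π u \ {j} = {u, v}
    rw [hπu]
    ext y
    simp only [Finset.mem_sdiff, Finset.mem_insert, Finset.mem_singleton]
    constructor
    · rintro ⟨h1, _⟩; exact h1
    · rintro (rfl | rfl)
      · exact ⟨Or.inl rfl, Ne.symm hju⟩
      · exact ⟨Or.inr rfl, Ne.symm hjv⟩
  · show π i \ {j} = {i}
    rw [hπi]
    exact pair_sdiff_right hij
  · rw [hw.1 u i]; exact le_of_lt hfu.2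
  · rw [hw.1 v i]; exact le_of_lt hfv.2
end

section
/- If every connected component of the friendship graph of a symmetric friend-oriented hedonic game is either a clique or has minimum degree at least k+1, then the partition of players into the connected components of the friendship graph is NS-robust under deletion of at most k players. -/
open Finset

section Aux

variable {α : Type*} [DecidableEq α] [Fintype α] {w : α → α → ℤ}

lemma friend_symm (hw : FriendOriented w) {i j : α} (h : Friend w i j) : Friend w j i :=
  ⟨h.1.symm, by rw [← hw.1 i j]; exact h.2⟩

lemma samecomp_symm (hw : FriendOriented w) {i j : α} (h : SameComp w i j) : SameComp w j i := by
  induction h with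
  | refl => exact Relation.ReflTransGen.refl
  | tail _ hbc ih =>
      exact Relation.ReflTransGen.trans (Relation.ReflTransGen.single (friend_symm hw hbc)) ih

lemma mem_pi_self {π : α → Finset α} (hcomp : ∀ i j : α, j ∈ π i ↔ SameComp w i j) (i : α) :
    i ∈ π i := (hcomp i i).mpr Relation.ReflTransGen.refl

lemma comp_eq_of_mem (hw : FriendOriented w) {π : α → Finset α}
    (hcomp : ∀ i j : α, j ∈ π i ↔ SameComp w i j) {i j : α} (h : j ∈ π i) : π j = π i := by
  ext x
  rw [hcomp, hcomp]
  constructor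
  · intro hx; exact ((hcomp i j).mp h).trans hx
  · intro hx; exact (samecomp_symm hw ((hcomp i j).mp h)).trans hx

lemma w_ge_neg_one (hw : FriendOriented w) (i j : α) : -1 ≤ w i j := by
  rcases eq_or_ne i j with rfl | hne
  · rw [hw.2.1]; norm_num
  · rcases hw.2.2 i j hne with h | h <;> rw [h]
    · have : (0 : ℤ) ≤ Fintype.card α := by positivity
      linarith

lemma w_nonpos_of_notMem (hw : FriendOriented w) {π : α → Finset α}
    (hcomp : ∀ i j : α, j ∈ π i ↔ SameComp w i j) {i j : α} (hj : j ∉ π i) : w i j ≤ 0 := by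
  have hne : i ≠ j := by rintro rfl; exact hj (mem_pi_self hcomp i)
  rcases hw.2.2 i j hne with h | h
  · exfalso
    have hcard : (0 : ℤ) < Fintype.card α := by
      have : 0 < Fintype.card α := Fintype.card_pos_iff.mpr ⟨i⟩
      exact_mod_cast this
    exact hj ((hcomp i j).mpr (Relation.ReflTransGen.single ⟨hne, by rw [h]; exact hcard⟩))
  · rw [h]; norm_num

/-- Key nonnegativity: after removing at most `k` players, every player's utility in its
truncated component is still nonnegative. -/
lemma cur_nonneg (hw : FriendOriented w) (k : ℕ) {π : α → Finset α}
    (hcomp : ∀ i j : α, j ∈ π i ↔ SameComp w i j)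
    (hcond : ∀ v : α,
      (∀ i ∈ comp w v, ∀ j ∈ comp w v, i ≠ j → Friend w i j) ∨
      (∀ u ∈ comp w v, k + 1 ≤ ({x ∈ comp w v | Friend w u x} : Set α).ncard))
    {X : Finset α} (hX : X.card ≤ k) (i : α) : 0 ≤ util w (π i \ X) i := by
  rcases hcond i with hclique | hdeg
  · apply Finset.sum_nonneg
    intro x hx
    have hxπ : x ∈ π i := (Finset.mem_sdiff.mp hx).1
    rcases eq_or_ne i x with rfl | hne
    · rw [hw.2.1]
    · have hf : Friend w i x :=
        hclique i Relation.ReflTransGen.refl x ((hcomp i x).mp hxπ) hne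
      exact le_of_lt hf.2
  · -- i has at least k+1 friends in its component; at least one survives deletion of X
    have hset : ({x ∈ comp w i | Friend w i x} : Set α)
        = ((π i).filter (fun x => Friend w i x) : Finset α) := by
      ext x
      simp only [Finset.coe_filter, Set.mem_setOf_eq, comp, Set.sep_setOf, hcomp]
    have hcard : k + 1 ≤ ((π i).filter (fun x => Friend w i x)).card := by
      have := hdeg i Relation.ReflTransGen.refl
      rwa [hset, Set.ncard_coe_finset] at this
    have hne : (((π i).filter (fun x => Friend w i x)) \ X).Nonempty := by
      rw [← Finset.card_pos]
      have h1 := Finset.le_card_sdiff X ((π i).filter (fun x => Friend w i x))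
      omega
    obtain ⟨j, hj⟩ := hne
    rw [Finset.mem_sdiff, Finset.mem_filter] at hj
    have hfr : Friend w i j := hj.1.2
    have hjT : j ∈ π i \ X := Finset.mem_sdiff.mpr ⟨hj.1.1, hj.2⟩
    have hwij : w i j = (Fintype.card α : ℤ) := by
      rcases hw.2.2 i j hfr.1 with h | h
      · exact h
      · exfalso; have := hfr.2; omega
    have hrest : -(((π i \ X).erase j).card : ℤ) ≤ ∑ x ∈ (π i \ X).erase j, w i x := by
      calc -((((π i \ X).erase j).card : ℤ))
          = ∑ _x ∈ (π i \ X).erase j, (-1 : ℤ) := by simp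
        _ ≤ ∑ x ∈ (π i \ X).erase j, w i x :=
            Finset.sum_le_sum (fun x _ => w_ge_neg_one hw i x)
    have hclt : ((π i \ X).erase j).card < Fintype.card α := by
      calc ((π i \ X).erase j).card < (π i \ X).card := Finset.card_erase_lt_of_mem hjT
        _ ≤ Fintype.card α := by
            rw [← Finset.card_univ]; exact Finset.card_le_univ _
    have hclt' : (((π i \ X).erase j).card : ℤ) < (Fintype.card α : ℤ) := by exact_mod_cast hclt
    unfold util
    rw [← Finset.add_sum_erase _ _ hjT, hwij]
    linarith

lemma key_stable (hw : FriendOriented w) (k : ℕ) {π : α → Finset α}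
    (hcomp : ∀ i j : α, j ∈ π i ↔ SameComp w i j)
    (hcond : ∀ v : α,
      (∀ i ∈ comp w v, ∀ j ∈ comp w v, i ≠ j → Friend w i j) ∨
      (∀ u ∈ comp w v, k + 1 ≤ ({x ∈ comp w v | Friend w u x} : Set α).ncard))
    {X : Finset α} (hX : X.card ≤ k) :
    NashStable w (Finset.univ \ X) (fun i => π i \ X) := by
  intro i _ S hdev
  obtain ⟨hco, hneq, hiS, hlt⟩ := hdev
  have hcur : 0 ≤ util w (π i \ X) i := cur_nonneg hw k hcomp hcond hX i
  have htar : util w (insert i S) i ≤ 0 := by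
    rcases hco with rfl | ⟨j, _, rfl⟩
    · simp [util, hw.2.1]
    · by_cases hji : π j = π i
      · exact absurd (by simp only [hji]) hneq
      · apply Finset.sum_nonpos
        intro x hx
        rcases Finset.mem_insert.mp hx with rfl | hxS
        · rw [hw.2.1]
        · have hxj : x ∈ π j := (Finset.mem_sdiff.mp hxS).1
          have hxnotin : x ∉ π i := by
            intro hxi
            exact hji ((comp_eq_of_mem hw hcomp hxj).symm.trans (comp_eq_of_mem hw hcomp hxi))
          exact w_nonpos_of_notMem hw hcomp hxnotin
  exact absurd hlt (not_lt.mpr (le_trans htar hcur))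

end Aux

/-- If every connected component of the friendship graph is a clique or
has minimum degree at least `k + 1`, then the partition into connected components is
NS-robust under deletion of at most `k` players. -/
theorem components_partition_ns_robust {α : Type*} [DecidableEq α] [Fintype α]
    (w : α → α → ℤ) (hw : FriendOriented w) (k : ℕ) (hk : 0 < k)
    (π : α → Finset α) (hcomp : ∀ i j : α, j ∈ π i ↔ SameComp w i j)
    (hcond : ∀ v : α,
      (∀ i ∈ comp w v, ∀ j ∈ comp w v, i ≠ j → Friend w i j) ∨
      (∀ u ∈ comp w v, k + 1 ≤ ({x ∈ comp w v | Friend w u x} : Set α).ncard)) :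
    Robust (NashStable w) Finset.univ π k := by
  constructor
  · have h := key_stable hw k hcomp hcond (X := ∅) (by simp)
    have h1 : (Finset.univ \ ∅ : Finset α) = Finset.univ := by simp
    have h2 : (fun i => π i \ (∅ : Finset α)) = π := by funext i; simp
    rwa [h1, h2] at h
  · intro X _ hXk
    exact key_stable hw k hcomp hcond hXk
end

section
/- For a symmetric friend-oriented hedonic game with k = 2, if a partition π is IR-robust under deletion of at most two players and S ∈ π is a coalition that is not a clique, then every player of S has at least three friends within S and |S| ≥ 4. -/
open Finset

/-- For `k = 2`, in an IR-robust partition of a symmetric friend-oriented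
game, every non-clique coalition has all its members with at least three friends inside
it, and has size at least four. -/
theorem ir_robust_k2_non_clique {α : Type*} [DecidableEq α] [Fintype α]
    (w : α → α → ℤ) (hw : FriendOriented w)
    (π : α → Finset α) (hπ : IsPartition (Finset.univ : Finset α) π)
    (hrob : Robust (IndRational w) Finset.univ π 2)
    (i : α) (hnc : ¬ IsClique w (π i)) :
    (∀ j ∈ π i, 3 ≤ ((π i).filter (fun l => Friend w j l)).card) ∧ 4 ≤ (π i).card := by
  classical
  have hne : Nonempty α := ⟨i⟩
  have hnpos : (0:ℤ) < (Fintype.card α : ℤ) := by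
    exact_mod_cast Fintype.card_pos
  -- non-friends have weight -1
  have henemy : ∀ j l : α, j ≠ l → ¬ Friend w j l → w j l = -1 := by
    intro j l hjl hnf
    rcases hw.2.2 j l hjl with h | h
    · exact absurd ⟨hjl, h ▸ hnpos⟩ hnf
    · exact h
  -- key lemma: any member with an enemy inside π i has ≥ 3 friends inside π i
  have key : ∀ j ∈ π i, ∀ b ∈ π i, j ≠ b → ¬ Friend w j b →
      3 ≤ ((π i).filter (fun l => Friend w j l)).card := by
    intro j hj b hb hjb hnf
    by_contra hcon
    push_neg at hcon
    set F := (π i).filter (fun l => Friend w j l) with hF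
    have hFcard : F.card ≤ 2 := by omega
    have hIR := hrob.2 F (Finset.subset_univ F) hFcard
    have hjF : j ∉ F := by
      simp only [hF, Finset.mem_filter]
      rintro ⟨-, hfr⟩
      exact hfr.1 rfl
    have hjmem : j ∈ Finset.univ \ F := by
      simp [hjF]
    have h0 := hIR j hjmem
    have hπj : π j = π i := hπ.2 i (Finset.mem_univ i) j hj
    simp only [hπj] at h0
    -- T = π i \ F contains j and b
    set T := π i \ F with hT
    have hjT : j ∈ T := Finset.mem_sdiff.mpr ⟨hj, hjF⟩
    have hbF : b ∉ F := by
      simp only [hF, Finset.mem_filter]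
      rintro ⟨-, hfr⟩
      exact hnf hfr
    have hbT : b ∈ T.erase j := Finset.mem_erase.mpr ⟨fun h => hjb h.symm,
      Finset.mem_sdiff.mpr ⟨hb, hbF⟩⟩
    have hsum : util w T j = w j j + ∑ l ∈ T.erase j, w j l :=
      (Finset.add_sum_erase T (fun l => w j l) hjT).symm
    have hle : ∑ l ∈ T.erase j, w j l ≤ ∑ _l ∈ T.erase j, (-1 : ℤ) := by
      apply Finset.sum_le_sum
      intro l hl
      have hlj : l ≠ j := (Finset.mem_erase.mp hl).1
      have hlT : l ∈ T := (Finset.mem_erase.mp hl).2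
      have hlF : l ∉ F := (Finset.mem_sdiff.mp hlT).2
      have hlπ : l ∈ π i := (Finset.mem_sdiff.mp hlT).1
      have hnfr : ¬ Friend w j l := by
        intro hfr
        exact hlF (Finset.mem_filter.mpr ⟨hlπ, hfr⟩)
      rw [henemy j l (fun h => hlj h.symm) hnfr]
    have hcard1 : 1 ≤ (T.erase j).card := Finset.card_pos.mpr ⟨b, hbT⟩
    have : util w T j ≤ -1 := by
      rw [hsum, hw.2.1 j]
      have : ∑ _l ∈ T.erase j, (-1 : ℤ) = -((T.erase j).card : ℤ) := by
        simp
      omega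
    omega
  -- extract the witnesses of non-cliqueness
  rw [IsClique] at hnc
  push_neg at hnc
  obtain ⟨a, ha, b, hb, hab, hnfab⟩ := hnc
  have h3a : 3 ≤ ((π i).filter (fun l => Friend w a l)).card := key a ha b hb hab hnfab
  -- size ≥ 4
  have hsub : (π i).filter (fun l => Friend w a l) ⊆ (π i).erase a := by
    intro l hl
    have h1 := Finset.mem_filter.mp hl
    exact Finset.mem_erase.mpr ⟨fun h => h1.2.1 h.symm, h1.1⟩
  have hcard4 : 4 ≤ (π i).card := by
    have h1 : 3 ≤ ((π i).erase a).card := le_trans h3a (Finset.card_le_card hsub)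
    have h2 : ((π i).erase a).card = (π i).card - 1 := Finset.card_erase_of_mem ha
    have h3 : 1 ≤ (π i).card := Finset.card_pos.mpr ⟨a, ha⟩
    omega
  refine ⟨?_, hcard4⟩
  intro j hj
  by_cases hex : ∃ l ∈ π i, j ≠ l ∧ ¬ Friend w j l
  · obtain ⟨l, hl, hjl, hnfl⟩ := hex
    exact key j hj l hl hjl hnfl
  · push_neg at hex
    have hsub2 : (π i).erase j ⊆ (π i).filter (fun l => Friend w j l) := by
      intro l hl
      have h1 := Finset.mem_erase.mp hl
      refine Finset.mem_filter.mpr ⟨h1.2, ?_⟩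
      by_contra hnfr
      exact hnfr (hex l h1.2 (fun h => h1.1 h.symm))
    have h1 : ((π i).erase j).card = (π i).card - 1 := Finset.card_erase_of_mem hj
    have h2 := Finset.card_le_card hsub2
    omega
end

section
/- In a symmetric friend-oriented hedonic game, any partition into connected components of the friendship graph is Nash stable, individually stable, contractually individually stable, and individually rational. -/
open Finset

/-!
Friendship is symmetric, so the components are the classes of an equivalence relation and a
player has no friend outside its own component; joining any other coalition therefore gives it
utility at most `0`. Inside its component a player is either alone (utility `0`) or has a friend,
worth `n`, which outweighs the at most `n - 1` other members, each worth at least `-1`. So no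
player has an NS-deviation, and IS- and CIS-deviations are in particular NS-deviations.
-/

section Weights

variable {α : Type*} {w : α → α → ℤ} {i j k : α}

theorem Friend.symm (hsymm : ∀ i j, w i j = w j i) (h : Friend w i j) : Friend w j i :=
  ⟨h.1.symm, hsymm i j ▸ h.2⟩

theorem SameComp.symm (hsymm : ∀ i j, w i j = w j i) (h : SameComp w i j) : SameComp w j i := by
  induction h with
  | refl => exact .refl
  | tail _ hbc ih => exact .head (hbc.symm hsymm) ih

theorem util_nonpos_of_forall_not_friend [DecidableEq α] {S : Finset α} (hdiag : w i i = 0)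
    (h : ∀ k ∈ S, ¬ Friend w i k) : util w S i ≤ 0 := by
  refine Finset.sum_nonpos fun k hk => ?_
  by_cases hik : i = k
  · exact hik ▸ hdiag.le
  · exact not_lt.1 fun hpos => h k hk ⟨hik, hpos⟩

end Weights

namespace FriendOriented

variable {α : Type*} [Fintype α] {w : α → α → ℤ} {i k : α}

theorem neg_one_le (hw : FriendOriented w) (i j : α) : -1 ≤ w i j := by
  by_cases hij : i = j
  · rw [hij, hw.2.1]; norm_num
  · rcases hw.2.2 i j hij with h | h <;> omega

theorem eq_card_of_friend (hw : FriendOriented w) (h : Friend w i k) :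
    w i k = Fintype.card α :=
  (hw.2.2 i k h.1).resolve_right fun h' => by have := h.2; omega

theorem one_le_util_of_friend_mem [DecidableEq α] (hw : FriendOriented w) {S : Finset α}
    (hk : k ∈ S) (h : Friend w i k) : 1 ≤ util w S i := by
  have hcard : ((S.erase k).card : ℤ) < Fintype.card α := by
    exact_mod_cast Finset.card_lt_univ_of_notMem (Finset.notMem_erase k S)
  calc (1 : ℤ) ≤ w i k + (S.erase k).card • (-1) := by
        rw [hw.eq_card_of_friend h, smul_neg, nsmul_eq_mul, mul_one]; omega
    _ ≤ w i k + ∑ j ∈ S.erase k, w i j := by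
        gcongr; exact Finset.card_nsmul_le_sum _ _ _ fun j _ => hw.neg_one_le i j
    _ = util w S i := Finset.add_sum_erase S (w i) hk

end FriendOriented

theorem NashStable.indStable {α : Type*} [DecidableEq α] {w : α → α → ℤ} {V : Finset α}
    {π : α → Finset α} (h : NashStable w V π) : IndStable w V π :=
  fun i hi S hdev => h i hi S hdev.1

theorem IndStable.ciStable {α : Type*} [DecidableEq α] {w : α → α → ℤ} {V : Finset α}
    {π : α → Finset α} (h : IndStable w V π) : CIStable w V π :=
  fun i hi S hdev => h i hi S hdev.1

def IsComponentPartition {α : Type*} (w : α → α → ℤ) (π : α → Finset α) : Prop :=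
  ∀ i j, j ∈ π i ↔ SameComp w i j

namespace IsComponentPartition

variable {α : Type*} {w : α → α → ℤ} {π : α → Finset α} {i j k : α}

theorem mem_self (hπ : IsComponentPartition w π) (i : α) : i ∈ π i :=
  (hπ i i).2 .refl

theorem eq_of_mem (hπ : IsComponentPartition w π) (hsymm : ∀ i j, w i j = w j i)
    (hj : j ∈ π i) : π j = π i := by
  have hij := (hπ i j).1 hj
  ext k
  rw [hπ, hπ]
  exact ⟨hij.trans, (hij.symm hsymm).trans⟩

theorem exists_friend_mem_of_ne (hπ : IsComponentPartition w π) (hj : j ∈ π i) (hji : j ≠ i) :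
    ∃ k ∈ π i, Friend w i k := by
  rcases ((hπ i j).1 hj).cases_head with rfl | ⟨k, hik, -⟩
  · exact absurd rfl hji
  · exact ⟨k, (hπ i k).2 (.single hik), hik⟩

theorem not_friend_of_mem_coalition [DecidableEq α] (hπ : IsComponentPartition w π)
    (hsymm : ∀ i j, w i j = w j i) {V S : Finset α} (hS : IsCoalitionOf V π S) (hne : S ≠ π i)
    (hk : k ∈ S) : ¬ Friend w i k := by
  rcases hS with rfl | ⟨j, -, rfl⟩
  · exact absurd hk (Finset.notMem_empty k)
  · intro hik
    have hki : k ∈ π i := (hπ i k).2 (.single hik)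
    exact hne ((hπ.eq_of_mem hsymm hk).symm.trans (hπ.eq_of_mem hsymm hki))

theorem util_self_nonneg [DecidableEq α] [Fintype α] (hπ : IsComponentPartition w π)
    (hw : FriendOriented w) (i : α) : 0 ≤ util w (π i) i := by
  by_cases h : ∃ j ∈ π i, j ≠ i
  · obtain ⟨j, hj, hji⟩ := h
    obtain ⟨k, hk, hik⟩ := hπ.exists_friend_mem_of_ne hj hji
    exact zero_le_one.trans (hw.one_le_util_of_friend_mem hk hik)
  · push Not at h
    rw [Finset.eq_singleton_iff_unique_mem.2 ⟨hπ.mem_self i, h⟩, util, Finset.sum_singleton,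
      hw.2.1]

theorem not_nsDev [DecidableEq α] [Fintype α] (hπ : IsComponentPartition w π)
    (hw : FriendOriented w) (V : Finset α) (i : α) (S : Finset α) : ¬ NSDev w V π i S := by
  rintro ⟨hS, hne, -, hlt⟩
  have hdev_nonpos : util w (insert i S) i ≤ 0 :=
    util_nonpos_of_forall_not_friend (hw.2.1 i) <| (Finset.forall_mem_insert _ _ _).2
      ⟨fun hii => hii.1 rfl, fun k hk => hπ.not_friend_of_mem_coalition hw.1 hS hne hk⟩
  exact hlt.not_ge (hdev_nonpos.trans (hπ.util_self_nonneg hw i))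

end IsComponentPartition

/-- In a symmetric friend-oriented game, the partition into connected
components of the friendship graph is Nash stable, individually stable, contractually
individually stable, and individually rational. -/
theorem components_partition_stable {α : Type*} [DecidableEq α] [Fintype α]
    (w : α → α → ℤ) (hw : FriendOriented w)
    (π : α → Finset α) (hcomp : ∀ i j : α, j ∈ π i ↔ SameComp w i j) :
    NashStable w Finset.univ π ∧ IndStable w Finset.univ π ∧
      CIStable w Finset.univ π ∧ IndRational w Finset.univ π := by
  have hπ : IsComponentPartition w π := hcomp
  have hNS : NashStable w Finset.univ π := fun i _ S => hπ.not_nsDev hw _ i S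
  exact ⟨hNS, hNS.indStable, hNS.indStable.ciStable, fun i _ => hπ.util_self_nonneg hw i⟩
end
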